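/- Let k < n and let λ be the partition with λ_1 = ... = λ_{k-1} = k and λ_i = i+1 for k ≤ i ≤ n. Then for every r with k ≤ r ≤ n, the ideal of Z[x_1,...,x_n] generated by h_k(x_1), h_{k-1}(x_1,x_2), ..., h_2(x_1,...,x_{k-1}), x_k h_1(x_1,...,x_k), x_{k+1} h_1(x_1,...,x_{k+1}), ..., x_r h_1(x_1,...,x_r) equals the ideal generated by h_k(x_1), h_{k-1}(x_1,x_2), ..., h_2(x_1,...,x_{k-1}), h_2(x_1,...,x_k), ..., h_2(x_1,...,x_r). In particular for r = n these ideals equal I_λ. -/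
import Mathlib


open MvPolynomial Finset

/-- The set of the first `j` variables among `x_0, ..., x_{n-1}`. -/
def fv (n j : ℕ) : Finset (Fin n) := Finset.univ.filter (fun i => (i : ℕ) < j)

/-- Complete homogeneous symmetric polynomial of degree `m` in the variables indexed by `S`. -/
noncomputable def hh (R : Type*) [CommRing R] (n m : ℕ) (S : Finset (Fin n)) :
    MvPolynomial (Fin n) R :=
  ∑ s ∈ S.sym m, ((s : Multiset (Fin n)).map (X : Fin n → MvPolynomial (Fin n) R)).prod

/-- Elementary symmetric polynomial of degree `m` in the variables indexed by `S`. -/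
noncomputable def ee (R : Type*) [CommRing R] (n m : ℕ) (S : Finset (Fin n)) :
    MvPolynomial (Fin n) R :=
  ∑ s ∈ S.powersetCard m, ∏ i ∈ s, X i

lemma sym_insert_split {α : Type*} [DecidableEq α] (a : α) (S : Finset α) (ha : a ∉ S) (m : ℕ) :
    (insert a S).sym (m+1) = S.sym (m+1) ∪ ((insert a S).sym m).image (Sym.cons a) := by
  ext s
  simp only [mem_union, mem_image, mem_sym_iff, mem_insert]
  constructor
  · intro h
    by_cases has : a ∈ s
    · right
      refine ⟨s.erase a has, fun b hb => ?_, Sym.cons_erase has⟩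
      have : b ∈ s := by
        have := Multiset.mem_of_mem_erase (by simpa [Sym.erase] using hb)
        exact this
      exact h b this
    · left
      intro b hb
      rcases h b hb with rfl | hbS
      · exact absurd hb has
      · exact hbS
  · rintro (h | ⟨t, ht, rfl⟩)
    · exact fun b hb => Or.inr (h b hb)
    · intro b hb
      rcases Sym.mem_cons.1 hb with rfl | hbt
      · exact Or.inl rfl
      · exact ht b hbt

lemma hh_insert (R : Type*) [CommRing R] (n m : ℕ) (a : Fin n) (S : Finset (Fin n)) (ha : a ∉ S) :
    hh R n (m+1) (insert a S) = hh R n (m+1) S + X a * hh R n m (insert a S) := by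
  have hdisj : Disjoint (S.sym (m+1)) (((insert a S).sym m).image (Sym.cons a)) := by
    rw [Finset.disjoint_left]
    rintro s hs hs'
    simp only [mem_image] at hs'
    obtain ⟨t, _, rfl⟩ := hs'
    have : a ∈ S := (mem_sym_iff.1 hs) a (Sym.mem_cons_self a t)
    exact ha this
  have hinj : Set.InjOn (Sym.cons a) (((insert a S).sym m : Finset (Sym (Fin n) m)) : Set (Sym (Fin n) m)) := by
    intro x _ y _ hxy
    have := congrArg (fun s : Sym (Fin n) (m+1) => (s : Multiset (Fin n))) hxy
    simp only [Sym.coe_cons] at this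
    exact Sym.coe_injective (by
      have := congrArg (Multiset.erase · a) this
      simpa using this)
  rw [hh, sym_insert_split a S ha m, Finset.sum_union hdisj, Finset.sum_image hinj]
  rw [hh, hh, Finset.mul_sum]
  congr 1
  apply Finset.sum_congr rfl
  intro t _
  rw [Sym.coe_cons, Multiset.map_cons, Multiset.prod_cons]

lemma fv_succ (n : ℕ) (j : Fin n) : fv n ((j:ℕ)+1) = insert j (fv n (j:ℕ)) := by
  ext i
  simp only [fv, mem_filter, mem_univ, true_and, mem_insert, Fin.ext_iff]
  omega

lemma not_mem_fv (n : ℕ) (j : Fin n) : j ∉ fv n (j:ℕ) := by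
  simp [fv]

lemma hh_one_insert (R : Type*) [CommRing R] (n : ℕ) (S : Finset (Fin n)) :
    True := trivial

lemma hh_zero (R : Type*) [CommRing R] (n : ℕ) (S : Finset (Fin n)) :
    hh R n 0 S = 1 := by
  simp [hh, Finset.sym_zero]
  rfl

lemma hh_rec (n : ℕ) (j : Fin n) :
    hh ℤ n 2 (fv n ((j:ℕ)+1)) = hh ℤ n 2 (fv n (j:ℕ)) + X j * hh ℤ n 1 (fv n ((j:ℕ)+1)) := by
  rw [fv_succ]
  exact hh_insert ℤ n 1 j _ (not_mem_fv n j)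

lemma hh_two_empty (n : ℕ) : hh ℤ n 2 (fv n 0) = 0 := by
  have : fv n 0 = ∅ := by ext i; simp [fv]
  rw [this, hh]
  have : (∅ : Finset (Fin n)).sym 2 = ∅ := by
    rw [Finset.sym_eq_empty]; exact ⟨two_ne_zero, rfl⟩
  rw [this, Finset.sum_empty]

/-- for the partition `λ` with `λ_1 = ... = λ_{k-1} = k` and `λ_i = i+1` for
`k ≤ i ≤ n` (with `k < n`), and every `k ≤ r ≤ n`, the ideal generated by
`G_1 = h_k(x_1), ..., G_{k-1} = h_2(x_1..x_{k-1}), G_j = x_j h_1(x_1..x_j)` (`k ≤ j ≤ r`)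
equals the ideal generated by `h_k(x_1), ..., h_2(x_1..x_{k-1}), h_2(x_1..x_k), ...,
h_2(x_1..x_r)`; in particular, for `r = n` both equal `I_λ`.
(Variables are 0-indexed by `Fin n`; the 1-indexed row `j' = j+1`.) -/
theorem stmt6 (n k : ℕ) (hk : 1 ≤ k) (hkn : k < n) :
    (∀ r, k ≤ r → r ≤ n →
      Ideal.span {f : MvPolynomial (Fin n) ℤ | ∃ j : Fin n, (j : ℕ) < r ∧
        f = if (j : ℕ) + 1 < k then hh ℤ n (k - (j : ℕ)) (fv n ((j : ℕ) + 1))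
            else X j * hh ℤ n 1 (fv n ((j : ℕ) + 1))} =
      Ideal.span {f : MvPolynomial (Fin n) ℤ | ∃ j : Fin n, (j : ℕ) < r ∧
        f = if (j : ℕ) + 1 < k then hh ℤ n (k - (j : ℕ)) (fv n ((j : ℕ) + 1))
            else hh ℤ n 2 (fv n ((j : ℕ) + 1))}) ∧
    Ideal.span {f : MvPolynomial (Fin n) ℤ | ∃ j : Fin n,
        f = if (j : ℕ) + 1 < k then hh ℤ n (k - (j : ℕ)) (fv n ((j : ℕ) + 1))
            else X j * hh ℤ n 1 (fv n ((j : ℕ) + 1))} =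
    Ideal.span (Set.range fun j : Fin n =>
      hh ℤ n ((if (j : ℕ) + 1 < k then k else (j : ℕ) + 2) - (j : ℕ)) (fv n ((j : ℕ) + 1))) := by
  have main : ∀ r, k ≤ r → r ≤ n →
      Ideal.span {f : MvPolynomial (Fin n) ℤ | ∃ j : Fin n, (j : ℕ) < r ∧
        f = if (j : ℕ) + 1 < k then hh ℤ n (k - (j : ℕ)) (fv n ((j : ℕ) + 1))
            else X j * hh ℤ n 1 (fv n ((j : ℕ) + 1))} =
      Ideal.span {f : MvPolynomial (Fin n) ℤ | ∃ j : Fin n, (j : ℕ) < r ∧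
        f = if (j : ℕ) + 1 < k then hh ℤ n (k - (j : ℕ)) (fv n ((j : ℕ) + 1))
            else hh ℤ n 2 (fv n ((j : ℕ) + 1))} := by
    intro r hkr hrn
    set S1 : Set (MvPolynomial (Fin n) ℤ) := {f : MvPolynomial (Fin n) ℤ | ∃ j : Fin n, (j : ℕ) < r ∧
        f = if (j : ℕ) + 1 < k then hh ℤ n (k - (j : ℕ)) (fv n ((j : ℕ) + 1))
            else X j * hh ℤ n 1 (fv n ((j : ℕ) + 1))} with hS1
    set S2 : Set (MvPolynomial (Fin n) ℤ) := {f : MvPolynomial (Fin n) ℤ | ∃ j : Fin n, (j : ℕ) < r ∧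
        f = if (j : ℕ) + 1 < k then hh ℤ n (k - (j : ℕ)) (fv n ((j : ℕ) + 1))
            else hh ℤ n 2 (fv n ((j : ℕ) + 1))} with hS2
    -- Boundary/if-branch membership: hh 2 (fv m) for k ≤ m+1, m ≤ r
    have memS2 : ∀ m : ℕ, k ≤ m + 1 → m ≤ r → hh ℤ n 2 (fv n m) ∈ Ideal.span S2 := by
      intro m hm1 hmr
      rcases Nat.eq_zero_or_pos m with rfl | hm
      · rw [hh_two_empty]; exact Ideal.zero_mem _
      · have hj : m - 1 < n := by omega
        apply Ideal.subset_span
        refine ⟨⟨m - 1, hj⟩, by simpa using (by omega : m - 1 < r), ?_⟩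
        by_cases hc : m - 1 + 1 < k
        · have h1 : ((⟨m - 1, hj⟩ : Fin n) : ℕ) + 1 < k := by simpa using hc
          rw [if_pos h1]
          have e1 : k - ((⟨m - 1, hj⟩ : Fin n) : ℕ) = 2 := by simp; omega
          have e2 : ((⟨m - 1, hj⟩ : Fin n) : ℕ) + 1 = m := by simp; omega
          rw [e1, e2]
        · have h1 : ¬ (((⟨m - 1, hj⟩ : Fin n) : ℕ) + 1 < k) := by simpa using hc
          rw [if_neg h1]
          have e2 : ((⟨m - 1, hj⟩ : Fin n) : ℕ) + 1 = m := by simp; omega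
          rw [e2]
    have memS1 : ∀ m : ℕ, k ≤ m + 1 → m ≤ r → hh ℤ n 2 (fv n m) ∈ Ideal.span S1 := by
      intro m
      induction m using Nat.strong_induction_on with
      | _ m ih =>
        intro hm1 hmr
        rcases Nat.eq_zero_or_pos m with rfl | hm
        · rw [hh_two_empty]; exact Ideal.zero_mem _
        · have hj : m - 1 < n := by omega
          by_cases hc : m < k
          · apply Ideal.subset_span
            refine ⟨⟨m - 1, hj⟩, by simpa using (by omega : m - 1 < r), ?_⟩
            have h1 : ((⟨m - 1, hj⟩ : Fin n) : ℕ) + 1 < k := by simp; omega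
            rw [if_pos h1]
            have e1 : k - ((⟨m - 1, hj⟩ : Fin n) : ℕ) = 2 := by simp; omega
            have e2 : ((⟨m - 1, hj⟩ : Fin n) : ℕ) + 1 = m := by simp; omega
            rw [e1, e2]
          · have hrec := hh_rec n ⟨m - 1, hj⟩
            have e2 : ((⟨m - 1, hj⟩ : Fin n) : ℕ) + 1 = m := by simp; omega
            rw [e2] at hrec
            rw [hrec]
            apply Ideal.add_mem
            · have := ih (m - 1) (by omega) (by omega) (by omega)
              simpa using this
            · apply Ideal.subset_span
              refine ⟨⟨m - 1, hj⟩, by simpa using (by omega : m - 1 < r), ?_⟩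
              have h1 : ¬ (((⟨m - 1, hj⟩ : Fin n) : ℕ) + 1 < k) := by simp; omega
              rw [if_neg h1, e2]
    apply le_antisymm
    · rw [Ideal.span_le]
      rintro f ⟨j, hjr, rfl⟩
      by_cases hc : (j : ℕ) + 1 < k
      · rw [if_pos hc]
        exact Ideal.subset_span ⟨j, hjr, (if_pos hc).symm⟩
      · rw [if_neg hc]
        have hrec := hh_rec n j
        have heq : X j * hh ℤ n 1 (fv n ((j : ℕ) + 1)) =
            hh ℤ n 2 (fv n ((j : ℕ) + 1)) - hh ℤ n 2 (fv n (j : ℕ)) := by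
          rw [hrec]; ring
        rw [heq]
        exact Ideal.sub_mem _ (memS2 ((j : ℕ) + 1) (by omega) (by omega))
          (memS2 (j : ℕ) (by omega) (by omega))
    · rw [Ideal.span_le]
      rintro f ⟨j, hjr, rfl⟩
      by_cases hc : (j : ℕ) + 1 < k
      · rw [if_pos hc]
        exact Ideal.subset_span ⟨j, hjr, (if_pos hc).symm⟩
      · rw [if_neg hc]
        exact memS1 ((j : ℕ) + 1) (by omega) (by omega)
  refine ⟨main, ?_⟩
  have e1 : {f : MvPolynomial (Fin n) ℤ | ∃ j : Fin n,
        f = if (j : ℕ) + 1 < k then hh ℤ n (k - (j : ℕ)) (fv n ((j : ℕ) + 1))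
            else X j * hh ℤ n 1 (fv n ((j : ℕ) + 1))} =
      {f : MvPolynomial (Fin n) ℤ | ∃ j : Fin n, (j : ℕ) < n ∧
        f = if (j : ℕ) + 1 < k then hh ℤ n (k - (j : ℕ)) (fv n ((j : ℕ) + 1))
            else X j * hh ℤ n 1 (fv n ((j : ℕ) + 1))} := by
    ext f; simp [Fin.is_lt]
  have efun : ∀ j : Fin n,
      hh ℤ n ((if (j : ℕ) + 1 < k then k else (j : ℕ) + 2) - (j : ℕ)) (fv n ((j : ℕ) + 1)) =
      if (j : ℕ) + 1 < k then hh ℤ n (k - (j : ℕ)) (fv n ((j : ℕ) + 1))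
        else hh ℤ n 2 (fv n ((j : ℕ) + 1)) := by
    intro j
    by_cases hc : (j : ℕ) + 1 < k
    · rw [if_pos hc, if_pos hc]
    · rw [if_neg hc, if_neg hc]; congr 1; omega
  have e2 : (Set.range fun j : Fin n =>
      hh ℤ n ((if (j : ℕ) + 1 < k then k else (j : ℕ) + 2) - (j : ℕ)) (fv n ((j : ℕ) + 1))) =
      {f : MvPolynomial (Fin n) ℤ | ∃ j : Fin n, (j : ℕ) < n ∧
        f = if (j : ℕ) + 1 < k then hh ℤ n (k - (j : ℕ)) (fv n ((j : ℕ) + 1))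
            else hh ℤ n 2 (fv n ((j : ℕ) + 1))} := by
    ext f
    constructor
    · rintro ⟨j, rfl⟩
      exact ⟨j, j.isLt, efun j⟩
    · rintro ⟨j, -, rfl⟩
      exact ⟨j, by simpa using efun j⟩
  rw [e1, e2, main n (le_of_lt hkn) le_rfl]
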